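/- arXiv:2209.00457 — 8 statements merged into one kernel-verified Lean document; each statement's English description precedes it below -/
import Mathlib

section
/- For x ≥ e, the principal branch of the Lambert W function satisfies ln x − ln(ln x) ≤ W(x) ≤ ln x − (1/2) ln(ln x). -/
private lemma mul_exp_le_inv {a b : ℝ} (_ha : 0 ≤ a) (hb : 0 ≤ b)
    (h : a * Real.exp a ≤ b * Real.exp b) : a ≤ b := by
  by_contra hlt
  push_neg at hlt
  have ha' : 0 < a := lt_of_le_of_lt hb hlt
  have h1 : b * Real.exp b ≤ b * Real.exp a :=
    mul_le_mul_of_nonneg_left (Real.exp_le_exp.mpr hlt.le) hb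
  have h2 : b * Real.exp a < a * Real.exp a :=
    mul_lt_mul_of_pos_right hlt (Real.exp_pos a)
  linarith

/-- For x ≥ e, the principal branch of the Lambert W function satisfies
    ln x − ln(ln x) ≤ W(x) ≤ ln x − (1/2)·ln(ln x). -/
theorem stmt_0 (W : ℝ → ℝ)
    (hW : ∀ y : ℝ, 0 ≤ y → 0 ≤ W y ∧ W y * Real.exp (W y) = y) :
    ∀ x : ℝ, Real.exp 1 ≤ x →
      Real.log x - Real.log (Real.log x) ≤ W x ∧
      W x ≤ Real.log x - (1 / 2) * Real.log (Real.log x) := by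
  intro x hx
  have hxpos : 0 < x := lt_of_lt_of_le (Real.exp_pos 1) hx
  obtain ⟨hW0, hWe⟩ := hW x hxpos.le
  set L := Real.log x with hLdef
  have hL1 : 1 ≤ L := by
    have := Real.log_le_log (Real.exp_pos 1) hx
    rwa [Real.log_exp] at this
  have hLpos : 0 < L := by linarith
  set l := Real.log L with hldef
  have hl0 : 0 ≤ l := Real.log_nonneg hL1
  have hlL : l ≤ L - 1 := Real.log_le_sub_one_of_pos hLpos
  have hexpL : Real.exp L = x := Real.exp_log hxpos
  have hexpl : Real.exp l = L := Real.exp_log hLpos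
  constructor
  · -- lower bound: (L - l) * exp (L - l) ≤ x = W x * exp (W x)
    apply mul_exp_le_inv (by linarith) hW0
    rw [hWe]
    have : Real.exp (L - l) = x / L := by
      rw [Real.exp_sub, hexpL, hexpl]
    rw [this]
    rw [div_eq_mul_inv]
    have hLinv : 0 < L⁻¹ := inv_pos.mpr hLpos
    have : (L - l) * (x * L⁻¹) ≤ L * (x * L⁻¹) := by
      apply mul_le_mul_of_nonneg_right (by linarith) (by positivity)
    calc (L - l) * (x * L⁻¹) ≤ L * (x * L⁻¹) := this
      _ = x := by field_simp
  · -- upper bound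
    set s := Real.exp (l / 2) with hsdef
    have hs1 : 1 ≤ s := Real.one_le_exp (by linarith)
    have hssq : s * s = L := by
      rw [hsdef, ← Real.exp_add]
      rw [show l / 2 + l / 2 = l by ring, hexpl]
    have hlogs : Real.log s = l / 2 := by rw [hsdef, Real.log_exp]
    have hkey : s ≤ L - l / 2 := by
      have h1 : Real.log s ≤ s - 1 := Real.log_le_sub_one_of_pos (by linarith)
      nlinarith
    apply mul_exp_le_inv hW0 (by linarith)
    rw [hWe, show L - 1 / 2 * l = L - l / 2 by ring]
    have hexp : Real.exp (L - l / 2) = x / s := by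
      rw [Real.exp_sub, hexpL, hsdef]
    rw [hexp]
    have hspos : 0 < s := by linarith
    rw [div_eq_mul_inv]
    have : s * (x * s⁻¹) ≤ (L - l / 2) * (x * s⁻¹) := by
      apply mul_le_mul_of_nonneg_right hkey (by positivity)
    calc x = s * (x * s⁻¹) := by field_simp
      _ ≤ (L - l / 2) * (x * s⁻¹) := this
end

section
/- For τ > 0 and σ > 1, the sequence M_p = p^{τ p^σ} (with M_0 = 1) is logarithmically convex: (M_p)^2 ≤ M_{p−1} · M_{p+1} for all p ≥ 1. -/
/-!
Since `log M_p = τ f(p)` with `f x = x ^ σ * log x`, log-convexity of `M` is the midpoint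
inequality `2 f(p) ≤ f(p - 1) + f(p + 1)`. On `[1, ∞)` we have `f x = σ⁻¹ φ(x ^ σ)` with
`φ y = y log y`, a convex function that is increasing there, composed with the convex `x ^ σ`;
hence `f` is convex on `[1, ∞)`, which covers `p ≥ 2`. For `p = 1` the claim is `1 ≤ M_2`.
-/

open Real Set

theorem convexOn_rpow_mul_log {σ : ℝ} (hσ : 1 ≤ σ) :
    ConvexOn ℝ (Ici 1) fun x : ℝ ↦ x ^ σ * log x := by
  have hpow : ConvexOn ℝ (Ici 1) fun x : ℝ ↦ x ^ σ :=
    (convexOn_rpow hσ).subset (Ici_subset_Ici.2 zero_le_one) (convex_Ici 1)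
  have himage : (fun x : ℝ ↦ x ^ σ) '' Ici 1 ⊆ Ici 1 := by
    rintro _ ⟨x, hx, rfl⟩
    exact one_le_rpow hx (by linarith)
  have hmulLog : ConvexOn ℝ ((fun x : ℝ ↦ x ^ σ) '' Ici 1) fun y ↦ y * log y :=
    convexOn_mul_log.subset (himage.trans (Ici_subset_Ici.2 zero_le_one))
      (isPreconnected_Ici.image _ (continuous_rpow_const (by linarith)).continuousOn).convex
  have hmono : MonotoneOn (fun y : ℝ ↦ y * log y) ((fun x : ℝ ↦ x ^ σ) '' Ici 1) :=
    mul_log_strictMonoOn.monotoneOn.mono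
      (himage.trans (Ici_subset_Ici.2 (exp_le_one_iff.2 (by norm_num))))
  refine ((hmulLog.comp hpow hmono).smul (inv_nonneg.2 (by linarith : (0 : ℝ) ≤ σ))).congr ?_
  intro x hx
  simp only [Function.comp, smul_eq_mul, log_rpow (by linarith [mem_Ici.1 hx] : (0 : ℝ) < x)]
  field_simp

theorem ConvexOn.two_mul_le_add_sub_add {s : Set ℝ} {f : ℝ → ℝ} (hf : ConvexOn ℝ s f) {x h : ℝ}
    (hl : x - h ∈ s) (hr : x + h ∈ s) : 2 * f x ≤ f (x - h) + f (x + h) := by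
  have := hf.2 hl hr (by norm_num : (0 : ℝ) ≤ 1 / 2) (by norm_num : (0 : ℝ) ≤ 1 / 2) (by norm_num)
  simp only [smul_eq_mul] at this
  rw [show 1 / 2 * (x - h) + 1 / 2 * (x + h) = x by ring] at this
  linarith

theorem rpow_mul_rpow_eq_exp {τ σ x : ℝ} (hx : 0 < x) :
    x ^ (τ * x ^ σ) = exp (τ * (x ^ σ * log x)) := by
  rw [rpow_def_of_pos hx]
  ring_nf

/-- For τ > 0 and σ > 1, the sequence M_p = p^{τ p^σ}, M_0 = 1, is log-convex:
    (M_p)² ≤ M_{p−1}·M_{p+1} for all p ≥ 1. -/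
theorem stmt_4 (τ σ : ℝ) (hτ : 0 < τ) (hσ : 1 < σ) (M : ℕ → ℝ)
    (hM0 : M 0 = 1)
    (hM : ∀ p : ℕ, 1 ≤ p → M p = (p : ℝ) ^ (τ * (p : ℝ) ^ σ)) :
    ∀ p : ℕ, 1 ≤ p → (M p) ^ 2 ≤ M (p - 1) * M (p + 1) := by
  intro p hp
  obtain rfl | hp2 : p = 1 ∨ 2 ≤ p := by omega
  · rw [hM0, hM 1 le_rfl, hM 2 one_le_two]
    simpa using one_le_rpow (by norm_num : (1 : ℝ) ≤ 2) (by positivity : 0 ≤ τ * (2 : ℝ) ^ σ)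
  set f : ℝ → ℝ := fun x ↦ x ^ σ * log x
  have hMf : ∀ q : ℕ, 1 ≤ q → M q = exp (τ * f q) := fun q hq ↦
    (hM q hq).trans (rpow_mul_rpow_eq_exp (by exact_mod_cast hq))
  have hx : (2 : ℝ) ≤ p := by exact_mod_cast hp2
  have hconv := (convexOn_rpow_mul_log hσ.le).two_mul_le_add_sub_add (x := p) (h := 1)
    (mem_Ici.2 (by linarith)) (mem_Ici.2 (by linarith))
  rw [hMf p hp, hMf (p - 1) (by omega), hMf (p + 1) (by omega), ← exp_nat_mul, ← exp_add,
    exp_le_exp, Nat.cast_sub hp]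
  push_cast
  linarith [mul_le_mul_of_nonneg_left hconv hτ.le]
end

section
/- For τ > 0 and σ > 1, there exists C > 0 such that M_{p+q} ≤ C^{p^σ + q^σ} · N_p · N_q for all p, q ∈ ℕ, where M_p = p^{τ p^σ} and N_p = p^{2^{σ−1} τ p^σ} (with M_0 = N_0 = 1). -/
/-!
Pass to logarithms: with `a = 2^(σ-1) τ`, it suffices that
`τ (p+q)^σ log(p+q) ≤ a p^σ log p + a q^σ log q + 2a (p^σ + q^σ)`.
Convexity of `t ↦ t^σ` gives `(p+q)^σ ≤ 2^(σ-1) (p^σ + q^σ)`, and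
`p^σ log(p+q) = p^σ log p + p^σ log(1 + q/p) ≤ p^σ log p + p^σ + q^σ`
because `log(1+t) ≤ t ≤ 1 + t^σ`; symmetrically for `q`. Hence `C = exp(2a)` works.
-/

open Real

lemma Real.rpow_add_le_mul_rpow_add_rpow {x y p : ℝ} (hx : 0 ≤ x) (hy : 0 ≤ y) (hp : 1 ≤ p) :
    (x + y) ^ p ≤ 2 ^ (p - 1) * (x ^ p + y ^ p) := by
  lift x to NNReal using hx
  lift y to NNReal using hy
  exact_mod_cast NNReal.rpow_add_le_mul_rpow_add_rpow x y hp

lemma log_one_add_le_one_add_rpow {t σ : ℝ} (ht : 0 ≤ t) (hσ : 1 ≤ σ) :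
    log (1 + t) ≤ 1 + t ^ σ := by
  have hlog : log (1 + t) ≤ t := by linarith [log_le_sub_one_of_pos (x := 1 + t) (by linarith)]
  rcases le_or_gt t 1 with ht1 | ht1
  · linarith [rpow_nonneg ht σ]
  · linarith [rpow_one t ▸ rpow_le_rpow_of_exponent_le ht1.le hσ]

lemma rpow_mul_log_add_le {x y σ : ℝ} (hx : 0 ≤ x) (hy : 0 ≤ y) (hσ : 1 ≤ σ) :
    x ^ σ * log (x + y) ≤ x ^ σ * log x + (x ^ σ + y ^ σ) := by
  rcases hx.eq_or_lt with rfl | hx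
  · simp [zero_rpow (by linarith : σ ≠ 0), rpow_nonneg hy]
  have hxy : x + y = x * (1 + y / x) := by field_simp
  have hlog : x ^ σ * log (1 + y / x) ≤ x ^ σ * (1 + y ^ σ / x ^ σ) := by
    rw [← div_rpow hy hx.le]
    exact mul_le_mul_of_nonneg_left (log_one_add_le_one_add_rpow (by positivity) hσ)
      (rpow_nonneg hx.le σ)
  have hcancel : x ^ σ * (1 + y ^ σ / x ^ σ) = x ^ σ + y ^ σ := by
    field_simp [(rpow_pos_of_pos hx σ).ne']
  rw [hxy, log_mul hx.ne' (by positivity), mul_add]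
  linarith

lemma mul_rpow_mul_log_add_le {x y τ σ : ℝ} (hx : 0 ≤ x) (hy : 0 ≤ y)
    (hlog : 0 ≤ log (x + y)) (hτ : 0 ≤ τ) (hσ : 1 ≤ σ) :
    τ * (x + y) ^ σ * log (x + y) ≤
      2 * (2 ^ (σ - 1) * τ) * (x ^ σ + y ^ σ) +
        2 ^ (σ - 1) * τ * x ^ σ * log x + 2 ^ (σ - 1) * τ * y ^ σ * log y := by
  set a := 2 ^ (σ - 1) * τ
  have ha : 0 ≤ a := by positivity
  have hconv : τ * (x + y) ^ σ ≤ a * (x ^ σ + y ^ σ) := by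
    calc τ * (x + y) ^ σ ≤ τ * (2 ^ (σ - 1) * (x ^ σ + y ^ σ)) :=
          mul_le_mul_of_nonneg_left (Real.rpow_add_le_mul_rpow_add_rpow hx hy hσ) hτ
      _ = a * (x ^ σ + y ^ σ) := by ring
  have hx' := rpow_mul_log_add_le hx hy hσ
  have hy' := rpow_mul_log_add_le hy hx hσ
  rw [add_comm y x] at hy'
  calc τ * (x + y) ^ σ * log (x + y) ≤ a * (x ^ σ + y ^ σ) * log (x + y) :=
        mul_le_mul_of_nonneg_right hconv hlog
    _ = a * (x ^ σ * log (x + y) + y ^ σ * log (x + y)) := by ring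
    _ ≤ a * ((x ^ σ * log x + (x ^ σ + y ^ σ)) + (y ^ σ * log y + (y ^ σ + x ^ σ))) := by
        gcongr
    _ = 2 * a * (x ^ σ + y ^ σ) + a * x ^ σ * log x + a * y ^ σ * log y := by ring

/-- At `p = 0` the formula reads `exp 0 = 1` because `Real.log 0 = 0`. -/
lemma eq_exp_mul_rpow_mul_log {f : ℕ → ℝ} {c σ : ℝ} (hσ : 0 < σ) (h0 : f 0 = 1)
    (h : ∀ p : ℕ, 1 ≤ p → f p = (p : ℝ) ^ (c * (p : ℝ) ^ σ)) (p : ℕ) :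
    f p = exp (c * (p : ℝ) ^ σ * log p) := by
  rcases p.eq_zero_or_pos with rfl | hp
  · simp [h0, zero_rpow hσ.ne']
  · rw [h p hp, rpow_def_of_pos (by exact_mod_cast hp)]
    ring_nf

/-- For τ > 0, σ > 1 there is C > 0 with M_{p+q} ≤ C^{p^σ+q^σ}·N_p·N_q, where
    M_p = p^{τ p^σ}, N_p = p^{(2^{σ−1}τ) p^σ}, M_0 = N_0 = 1. -/
theorem stmt_6 (τ σ : ℝ) (hτ : 0 < τ) (hσ : 1 < σ) (M N : ℕ → ℝ)
    (hM0 : M 0 = 1) (hN0 : N 0 = 1)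
    (hM : ∀ p : ℕ, 1 ≤ p → M p = (p : ℝ) ^ (τ * (p : ℝ) ^ σ))
    (hN : ∀ p : ℕ, 1 ≤ p → N p = (p : ℝ) ^ ((2 : ℝ) ^ (σ - 1) * τ * (p : ℝ) ^ σ)) :
    ∃ C : ℝ, 0 < C ∧ ∀ p q : ℕ,
      M (p + q) ≤ C ^ ((p : ℝ) ^ σ + (q : ℝ) ^ σ) * N p * N q := by
  have hσ0 : 0 < σ := by linarith
  refine ⟨exp (2 * (2 ^ (σ - 1) * τ)), exp_pos _, fun p q => ?_⟩
  rw [eq_exp_mul_rpow_mul_log hσ0 hM0 hM, eq_exp_mul_rpow_mul_log hσ0 hN0 hN,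
    eq_exp_mul_rpow_mul_log hσ0 hN0 hN, ← exp_mul, ← exp_add, ← exp_add, exp_le_exp]
  push_cast
  exact mul_rpow_mul_log_add_le (Nat.cast_nonneg p) (Nat.cast_nonneg q)
    (by exact_mod_cast log_natCast_nonneg (p + q)) hτ.le hσ.le
end

section
/- Let τ > 0, σ > 1, and f(x) = τ x^σ ln x for x > 0. Then for every integer p ≥ 2, (τ p^{σ−1}/2^{σ−1}) · ln(e p^σ / 2^σ) ≤ f(p) − f(p−1) ≤ τ p^{σ−1} · ln(e p^σ). -/
/-!
By the mean value theorem, `f p - f (p - 1) = f' c` for some `c ∈ (p - 1, p)`, where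
`f' x = τ x^(σ-1) (σ ln x + 1) = τ x^(σ-1) ln (e x^σ)`. Since `σ > 1`, `f'` is increasing
on `[1, ∞)`, and `p / 2 ≤ p - 1 < c < p`, so `f' (p / 2) ≤ f' c ≤ f' p`.
-/

open Real Set

lemma sub_bounds_of_monotoneOn_deriv {f f' : ℝ → ℝ} {a b : ℝ} (hab : a < b)
    (hf : ContinuousOn f (Icc a b)) (hf' : ∀ x ∈ Ioo a b, HasDerivAt f (f' x) x)
    (hmono : MonotoneOn f' (Icc a b)) :
    f' a * (b - a) ≤ f b - f a ∧ f b - f a ≤ f' b * (b - a) := by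
  obtain ⟨c, hc, hslope⟩ := exists_hasDerivAt_eq_slope f f' hab hf hf'
  have hfc : f b - f a = f' c * (b - a) := by
    rw [hslope, div_mul_cancel₀ _ (sub_ne_zero.2 hab.ne')]
  have hba : 0 ≤ b - a := sub_nonneg.2 hab.le
  rw [hfc]
  exact ⟨mul_le_mul_of_nonneg_right (hmono (left_mem_Icc.2 hab.le) (Ioo_subset_Icc_self hc)
      hc.1.le) hba,
    mul_le_mul_of_nonneg_right (hmono (Ioo_subset_Icc_self hc) (right_mem_Icc.2 hab.le)
      hc.2.le) hba⟩

lemma hasDerivAt_rpow_mul_log {x : ℝ} (hx : 0 < x) (σ : ℝ) :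
    HasDerivAt (fun y => y ^ σ * log y) (x ^ (σ - 1) * (σ * log x + 1)) x := by
  refine ((hasDerivAt_rpow_const (p := σ) (Or.inl hx.ne')).mul
    (hasDerivAt_log hx.ne')).congr_deriv ?_
  rw [rpow_sub_one hx.ne']
  field_simp

lemma monotoneOn_rpow_sub_one_mul_log_add_one {σ : ℝ} (hσ : 1 ≤ σ) :
    MonotoneOn (fun x => x ^ (σ - 1) * (σ * log x + 1)) (Ici 1) := by
  intro x (hx : 1 ≤ x) y (hy : 1 ≤ y) hxy
  have hlog : log x ≤ log y := log_le_log (by linarith) hxy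
  have hlog_nonneg : 0 ≤ log x := log_nonneg hx
  exact mul_le_mul (rpow_le_rpow (by linarith) hxy (by linarith)) (by nlinarith)
    (by positivity) (by positivity)

lemma log_exp_one_mul_rpow {x : ℝ} (hx : 0 < x) (σ : ℝ) :
    log (exp 1 * x ^ σ) = σ * log x + 1 := by
  rw [log_mul (exp_pos 1).ne' (rpow_pos_of_pos hx σ).ne', log_exp, log_rpow hx]
  ring

lemma rpow_mul_log_sub_bounds {σ : ℝ} (hσ : 1 ≤ σ) {p : ℝ} (hp : 2 ≤ p) :
    (p / 2) ^ (σ - 1) * (σ * log (p / 2) + 1) ≤ p ^ σ * log p - (p - 1) ^ σ * log (p - 1) ∧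
      p ^ σ * log p - (p - 1) ^ σ * log (p - 1) ≤ p ^ (σ - 1) * (σ * log p + 1) := by
  have hpos : ∀ x ∈ Icc (p - 1) p, 0 < x := fun x hx => by linarith [hx.1]
  have hmono := (monotoneOn_rpow_sub_one_mul_log_add_one hσ).mono
    (fun x (hx : x ∈ Icc (p - 1) p) => show 1 ≤ x by linarith [hx.1])
  have hbounds := sub_bounds_of_monotoneOn_deriv (by linarith : p - 1 < p)
    (fun x hx => (hasDerivAt_rpow_mul_log (hpos x hx) σ).continuousAt.continuousWithinAt)
    (fun x hx => hasDerivAt_rpow_mul_log (hpos x (Ioo_subset_Icc_self hx)) σ) hmono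
  simp only [sub_sub_cancel, mul_one] at hbounds
  exact ⟨(monotoneOn_rpow_sub_one_mul_log_add_one hσ (show 1 ≤ p / 2 by linarith)
    (show 1 ≤ p - 1 by linarith) (by linarith)).trans hbounds.1, hbounds.2⟩

/-- Mean-value bounds for f(x) = τ x^σ ln x: for integers p ≥ 2,
    (τ p^{σ−1}/2^{σ−1})·ln(e p^σ/2^σ) ≤ f(p) − f(p−1) ≤ τ p^{σ−1}·ln(e p^σ). -/
theorem stmt_11 (τ σ : ℝ) (hτ : 0 < τ) (hσ : 1 < σ) (f : ℝ → ℝ)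
    (hf : ∀ x : ℝ, 0 < x → f x = τ * x ^ σ * Real.log x) :
    ∀ p : ℕ, 2 ≤ p →
      τ * (p : ℝ) ^ (σ - 1) / (2 : ℝ) ^ (σ - 1) *
          Real.log (Real.exp 1 * (p : ℝ) ^ σ / (2 : ℝ) ^ σ) ≤ f p - f ((p : ℝ) - 1) ∧
      f p - f ((p : ℝ) - 1) ≤ τ * (p : ℝ) ^ (σ - 1) * Real.log (Real.exp 1 * (p : ℝ) ^ σ) := by
  intro p hp
  have hp2 : (2 : ℝ) ≤ p := by exact_mod_cast hp
  have hdiff : f p - f ((p : ℝ) - 1) = τ * (p ^ σ * log p - (p - 1) ^ σ * log (p - 1)) := by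
    rw [hf p (by linarith), hf (p - 1) (by linarith)]
    ring
  have hlower : τ * (p : ℝ) ^ (σ - 1) / 2 ^ (σ - 1) * log (exp 1 * (p : ℝ) ^ σ / 2 ^ σ) =
      τ * ((p / 2 : ℝ) ^ (σ - 1) * (σ * log (p / 2) + 1)) := by
    have hp0 : (0 : ℝ) ≤ p := by linarith
    rw [mul_div_assoc, ← div_rpow hp0 zero_le_two, mul_div_assoc, ← div_rpow hp0 zero_le_two,
      log_exp_one_mul_rpow (by linarith)]
    ring
  rw [hdiff, hlower, log_exp_one_mul_rpow (by linarith), mul_assoc]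
  obtain ⟨hlo, hhi⟩ := rpow_mul_log_sub_bounds hσ.le hp2
  exact ⟨mul_le_mul_of_nonneg_left hlo hτ.le, mul_le_mul_of_nonneg_left hhi hτ.le⟩
end

section
/- Let τ > 0, σ > 1, and define the associated function T_{τ,σ,h}(k) = sup_{p∈ℕ} max(0, ln(h^{p^σ} k^p / p^{τ p^σ})) for k > 0, with the convention 0^{τ·0^σ} = 1. Then for any h > 0 and any τ₂ > τ > τ₁ > 0 there exist real constants A, B such that T_{τ₂,σ,1}(k) + A ≤ T_{τ,σ,h}(k) ≤ T_{τ₁,σ,1}(k) + B for all k > 0. -/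
/-!
After expanding the logarithm, the `p`-th terms of `T_{τ,σ,h}(k)` and `T_{τ',σ,h'}(k)` differ by
`p^σ (ln h - ln h' + (τ' - τ) ln p)`. For `τ' < τ` this is negative for large `p`, hence bounded
above independently of `k`, and taking suprema gives `T_{τ,σ,h} ≤ T_{τ',σ,h'} + C`.
Both inequalities of the theorem are instances of this comparison.
-/

open Real Filter Set

lemma bddAbove_range_rpow_mul_add_mul_log (σ c : ℝ) {d : ℝ} (hd : d < 0) :
    BddAbove (range fun p : ℕ => (p : ℝ) ^ σ * (c + d * log p)) := by
  have hlog : ∀ᶠ p : ℕ in atTop, c / -d ≤ log p :=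
    (tendsto_log_atTop.comp tendsto_natCast_atTop_atTop).eventually_ge_atTop _
  refine (isBoundedUnder_of_eventually_le (a := 0) ?_).bddAbove_range
  filter_upwards [hlog] with p hp
  have : c + d * log p ≤ 0 := by
    rw [div_le_iff₀ (neg_pos.2 hd)] at hp
    linarith
  exact mul_nonpos_of_nonneg_of_nonpos (by positivity) this

lemma log_rpow_mul_pow_div_rpow {σ h k : ℝ} (hσ : σ ≠ 0) (hh : 0 < h) (hk : 0 < k)
    (τ : ℝ) (p : ℕ) :
    log (h ^ ((p : ℝ) ^ σ) * k ^ p / (p : ℝ) ^ (τ * (p : ℝ) ^ σ)) =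
      (p : ℝ) ^ σ * log h + p * log k - τ * (p : ℝ) ^ σ * log p := by
  rcases p.eq_zero_or_pos with rfl | hp
  · simp [zero_rpow hσ]
  · have hp : (0 : ℝ) < p := by exact_mod_cast hp
    rw [log_div (by positivity) (by positivity), log_mul (by positivity) (by positivity),
      log_rpow hh, log_pow, log_rpow hp]

/-- The `p`-th term `ln_+ (h^{p^σ} k^p / M_p)` of `T_{τ,σ,h}(k)`, with the logarithm expanded. -/
noncomputable def assocTerm (σ τ h k : ℝ) (p : ℕ) : ℝ :=
  max 0 ((p : ℝ) ^ σ * log h + p * log k - τ * (p : ℝ) ^ σ * log p)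

lemma bddAbove_range_assocTerm {σ τ : ℝ} (hσ : 1 ≤ σ) (hτ : 0 < τ) (h k : ℝ) :
    BddAbove (range (assocTerm σ τ h k)) := by
  obtain ⟨C, hC⟩ := bddAbove_range_rpow_mul_add_mul_log σ (log h + |log k|) (neg_neg_of_pos hτ)
  refine ⟨max 0 C, forall_mem_range.2 fun p => max_le_max le_rfl ?_⟩
  have hp : (p : ℝ) ≤ (p : ℝ) ^ σ := by
    rcases p.eq_zero_or_pos with rfl | hp
    · simp [zero_rpow_nonneg]
    · exact self_le_rpow_of_one_le (by exact_mod_cast hp) hσ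
  have hk : (p : ℝ) * log k ≤ (p : ℝ) ^ σ * |log k| :=
    (mul_le_mul_of_nonneg_left (le_abs_self _) p.cast_nonneg).trans
      (mul_le_mul_of_nonneg_right hp (abs_nonneg _))
  have hbound := hC (mem_range_self p)
  linarith

lemma exists_assocTerm_le_add (σ : ℝ) {τ τ' : ℝ} (hτ : τ' < τ) (h h' : ℝ) :
    ∃ C, ∀ k p, assocTerm σ τ h k p ≤ assocTerm σ τ' h' k p + C := by
  obtain ⟨C, hC⟩ := bddAbove_range_rpow_mul_add_mul_log σ (log h - log h') (sub_neg.2 hτ)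
  refine ⟨max 0 C, fun k p => ?_⟩
  have hdiff := hC (mem_range_self p)
  unfold assocTerm
  refine max_le (by positivity) ?_
  have hterm := le_max_right 0 ((p : ℝ) ^ σ * log h' + p * log k - τ' * (p : ℝ) ^ σ * log p)
  have hC0 := le_max_right 0 C
  linarith

lemma exists_iSup_assocTerm_le_add {σ τ τ' : ℝ} (hσ : 1 ≤ σ) (hτ' : 0 < τ') (hτ : τ' < τ)
    (h h' : ℝ) : ∃ C, ∀ k, ⨆ p, assocTerm σ τ h k p ≤ (⨆ p, assocTerm σ τ' h' k p) + C := by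
  obtain ⟨C, hC⟩ := exists_assocTerm_le_add σ hτ h h'
  exact ⟨C, fun k => ciSup_le fun p =>
    (hC k p).trans (add_le_add_left (le_ciSup (bddAbove_range_assocTerm hσ hτ' h' k) p) C)⟩

/-- Comparison of the associated functions: for h > 0 and τ₂ > τ > τ₁ > 0 there exist
    A, B ∈ ℝ with T_{τ₂,σ,1}(k) + A ≤ T_{τ,σ,h}(k) ≤ T_{τ₁,σ,1}(k) + B for all k > 0. -/
theorem stmt_13 (σ : ℝ) (hσ : 1 < σ) (M : ℝ → ℕ → ℝ) (T : ℝ → ℝ → ℝ → ℝ)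
    (hM0 : ∀ τ : ℝ, M τ 0 = 1)
    (hM : ∀ τ : ℝ, ∀ p : ℕ, 1 ≤ p → M τ p = (p : ℝ) ^ (τ * (p : ℝ) ^ σ))
    (hT : ∀ τ h k : ℝ, T τ h k =
      ⨆ p : ℕ, max 0 (Real.log (h ^ ((p : ℝ) ^ σ) * k ^ p / M τ p))) :
    ∀ h : ℝ, 0 < h → ∀ τ τ₁ τ₂ : ℝ, 0 < τ₁ → τ₁ < τ → τ < τ₂ →
      ∃ A B : ℝ, ∀ k : ℝ, 0 < k →
        T τ₂ 1 k + A ≤ T τ h k ∧ T τ h k ≤ T τ₁ 1 k + B := by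
  intro h hh τ τ₁ τ₂ hτ₁ hτ₁τ hττ₂
  have hσ0 : σ ≠ 0 := by positivity
  -- `M τ 0 = 0 ^ (τ * 0 ^ σ)` holds as well, since `(0 : ℝ) ^ (0 : ℝ) = 1`.
  have hM' : ∀ τ p, M τ p = (p : ℝ) ^ (τ * (p : ℝ) ^ σ) := by
    intro τ p
    rcases p.eq_zero_or_pos with rfl | hp
    · simp [hM0, zero_rpow hσ0]
    · exact hM τ p hp
  have hT' : ∀ τ h k, 0 < h → 0 < k → T τ h k = ⨆ p, assocTerm σ τ h k p := by
    intro τ h k hh hk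
    simp only [hT, hM', log_rpow_mul_pow_div_rpow hσ0 hh hk, assocTerm]
  obtain ⟨A, hA⟩ := exists_iSup_assocTerm_le_add hσ.le (hτ₁.trans hτ₁τ) hττ₂ 1 h
  obtain ⟨B, hB⟩ := exists_iSup_assocTerm_le_add hσ.le hτ₁ hτ₁τ h 1
  refine ⟨-A, B, fun k hk => ?_⟩
  rw [hT' τ₂ 1 k one_pos hk, hT' τ h k hh hk, hT' τ₁ 1 k one_pos hk]
  exact ⟨by linarith [hA k], hB k⟩
end

section
/- Fix σ > 1 and define φ_σ(t) = t^{σ/(σ−1)} / W(t)^{1/(σ−1)} for t > 0, φ_σ(0) = 0, where W is the principal branch of the Lambert W function. For each τ > 0 let T_{τ,σ}(k) = sup_{p∈ℕ} ln_+(k^p / p^{τ p^σ}). Then there exist constants A, B > 0 and Ã, B̃ ∈ ℝ such that B·φ_σ(ln_+ k) + B̃ ≤ T_{τ,σ}(k) ≤ A·φ_σ(ln_+ k) + Ã for all k > 0. -/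
/-!
With `t = ln_+ k` one has `ln (k^p / M_p) = p t - τ p^σ ln p`. Write `t = s e^s` with `s = W(t)`
and put `E = e^{s/(σ-1)}`; then `φ_σ(t) = t E` and `t = (σ-1) E^{σ-1} ln E`. A term with
`p ≤ β E` is at most `p t ≤ β t E`, while for `p > β E` (with `β^{σ-1} ≥ (σ-1)/τ`) the penalty
`τ p^σ ln p` already exceeds `p t`. Conversely, for `α` small the single term `p = ⌈α E⌉` is at
least `α t E / 4`, since its penalty costs at most three quarters of its gain `p t`.
-/

open Real

noncomputable section

/-- `T_{τ,σ}(k) = assocLog σ τ (ln_+ k)`, see `max_zero_log_pow_div_eq`. -/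
def assocLog (σ τ t : ℝ) : ℝ := ⨆ p : ℕ, max 0 (p * t - τ * (p : ℝ) ^ σ * log p)

def upperConst (σ τ : ℝ) : ℝ := max 1 (((σ - 1) / τ) ^ (1 / (σ - 1)))

def lowerConst (σ τ : ℝ) : ℝ := min 1 (((σ - 1) / (2 ^ (σ + 1) * τ)) ^ (1 / (σ - 1)))

end

section
variable {σ τ : ℝ}

lemma one_le_upperConst : 1 ≤ upperConst σ τ := le_max_left _ _

lemma div_le_upperConst_rpow (hσ : 1 < σ) (hτ : 0 < τ) :
    (σ - 1) / τ ≤ upperConst σ τ ^ (σ - 1) := by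
  have hσ1 : 0 < σ - 1 := sub_pos.2 hσ
  calc (σ - 1) / τ = (((σ - 1) / τ) ^ (1 / (σ - 1))) ^ (σ - 1) := by
        rw [← rpow_mul (by positivity), one_div_mul_cancel hσ1.ne', rpow_one]
    _ ≤ upperConst σ τ ^ (σ - 1) := rpow_le_rpow (by positivity) (le_max_right _ _) hσ1.le

lemma lowerConst_pos (hσ : 1 < σ) (hτ : 0 < τ) : 0 < lowerConst σ τ := by
  have hσ1 : 0 < σ - 1 := sub_pos.2 hσ
  exact lt_min one_pos (by positivity)

lemma lowerConst_le_one : lowerConst σ τ ≤ 1 := min_le_left _ _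

lemma mul_two_mul_lowerConst_rpow_le (hσ : 1 < σ) (hτ : 0 < τ) :
    τ * (2 * lowerConst σ τ) ^ σ ≤ lowerConst σ τ * (σ - 1) / 2 := by
  set α := lowerConst σ τ
  have hσ1 : 0 < σ - 1 := sub_pos.2 hσ
  have hα : 0 < α := lowerConst_pos hσ hτ
  have hpow : α ^ (σ - 1) ≤ (σ - 1) / (2 ^ (σ + 1) * τ) := by
    calc α ^ (σ - 1) ≤ (((σ - 1) / (2 ^ (σ + 1) * τ)) ^ (1 / (σ - 1))) ^ (σ - 1) :=
          rpow_le_rpow hα.le (min_le_right _ _) hσ1.le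
      _ = (σ - 1) / (2 ^ (σ + 1) * τ) := by
          rw [← rpow_mul (by positivity), one_div_mul_cancel hσ1.ne', rpow_one]
  have h2 : (2 : ℝ) ^ (σ + 1) = 2 ^ σ * 2 := rpow_add_one two_ne_zero σ
  have hασ : α ^ σ = α ^ (σ - 1) * α := by rw [← rpow_add_one hα.ne', sub_add_cancel]
  calc τ * (2 * α) ^ σ = τ * 2 ^ σ * α ^ (σ - 1) * α := by
        rw [mul_rpow zero_le_two hα.le, hασ]; ring
    _ ≤ τ * 2 ^ σ * ((σ - 1) / (2 ^ (σ + 1) * τ)) * α := by gcongr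
    _ = α * (σ - 1) / 2 := by rw [h2]; field_simp

lemma max_term_le_upperConst (hσ : 1 < σ) (hτ : 0 < τ) {t E : ℝ} (hE : 1 ≤ E)
    (ht : t = (σ - 1) * E ^ (σ - 1) * log E) (p : ℕ) :
    max 0 (p * t - τ * (p : ℝ) ^ σ * log p) ≤ upperConst σ τ * (t * E) := by
  set β := upperConst σ τ
  have hσ1 : 0 < σ - 1 := sub_pos.2 hσ
  have hβ : 1 ≤ β := one_le_upperConst
  have hlogE : 0 ≤ log E := log_nonneg hE
  have hlogp : 0 ≤ log (p : ℝ) := log_natCast_nonneg p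
  have ht0 : 0 ≤ t := by rw [ht]; positivity
  refine max_le (by positivity) ?_
  rcases le_or_gt (p : ℝ) (β * E) with hp | hp
  · have : 0 ≤ τ * (p : ℝ) ^ σ * log p := by positivity
    nlinarith [mul_le_mul_of_nonneg_right hp ht0]
  · have hEp : E ≤ p := by nlinarith
    have hp0 : (0 : ℝ) < p := by linarith
    have hpow : (σ - 1) / τ * E ^ (σ - 1) ≤ (p : ℝ) ^ (σ - 1) :=
      calc (σ - 1) / τ * E ^ (σ - 1) ≤ β ^ (σ - 1) * E ^ (σ - 1) := by
            gcongr; exact div_le_upperConst_rpow hσ hτ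
        _ = (β * E) ^ (σ - 1) := (mul_rpow (by positivity) (by positivity)).symm
        _ ≤ (p : ℝ) ^ (σ - 1) := rpow_le_rpow (by positivity) hp.le hσ1.le
    have ht_le : t ≤ τ * (p : ℝ) ^ (σ - 1) * log p :=
      calc t = τ * ((σ - 1) / τ * E ^ (σ - 1)) * log E := by rw [ht]; field_simp
        _ ≤ τ * (p : ℝ) ^ (σ - 1) * log p := by gcongr
    have hpσ : (p : ℝ) ^ σ = p * p ^ (σ - 1) := by
      rw [mul_comm, ← rpow_add_one hp0.ne', sub_add_cancel]
    have : 0 ≤ β * (t * E) := by positivity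
    rw [hpσ]
    nlinarith [mul_le_mul_of_nonneg_left ht_le hp0.le]

lemma le_term_ceil {α t E : ℝ} (hσ : 1 < σ) (hτ : 0 ≤ τ) (hα0 : 0 < α) (hα1 : α ≤ 1)
    (hα : τ * (2 * α) ^ σ ≤ α * (σ - 1) / 2) (hαE : 4 ≤ α * E)
    (ht : t = (σ - 1) * E ^ (σ - 1) * log E) :
    α / 4 * (t * E) ≤ ⌈α * E⌉₊ * t - τ * (⌈α * E⌉₊ : ℝ) ^ σ * log ⌈α * E⌉₊ := by
  set p : ℝ := (⌈α * E⌉₊ : ℝ)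
  have hσ1 : 0 < σ - 1 := sub_pos.2 hσ
  have hE4 : 4 ≤ E := by nlinarith
  have hx : α * E ≤ p := Nat.le_ceil _
  have hp2 : p ≤ 2 * α * E := by rw [mul_assoc]; exact Nat.ceil_le_two_mul (by linarith)
  have hlogE : 0 ≤ log E := log_nonneg (by linarith)
  have hlogp0 : 0 ≤ log p := log_natCast_nonneg _
  have hlogp : log p ≤ 3 / 2 * log E := by
    have hlog4 : 2 * log 2 ≤ log E := by
      rw [← log_rpow two_pos]; exact log_le_log (by positivity) (by norm_num; linarith)
    calc log p ≤ log (2 * E) := log_le_log (by linarith) (by nlinarith)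
      _ = log 2 + log E := log_mul two_ne_zero (by linarith)
      _ ≤ 3 / 2 * log E := by linarith
  have hEσ : E ^ σ = E ^ (σ - 1) * E := by rw [← rpow_add_one (by linarith), sub_add_cancel]
  have hpen : τ * p ^ σ * log p ≤ α * (σ - 1) / 2 * (E ^ (σ - 1) * E) * (3 / 2 * log E) :=
    calc τ * p ^ σ * log p ≤ τ * (2 * α * E) ^ σ * (3 / 2 * log E) := by gcongr
      _ = τ * (2 * α) ^ σ * (E ^ (σ - 1) * E) * (3 / 2 * log E) := by
          rw [mul_rpow (by positivity) (by linarith), hEσ]; ring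
      _ ≤ α * (σ - 1) / 2 * (E ^ (σ - 1) * E) * (3 / 2 * log E) := by gcongr
  have hgain : α * E * t ≤ p * t := mul_le_mul_of_nonneg_right hx (by rw [ht]; positivity)
  rw [ht] at hgain ⊢
  linarith

lemma bddAbove_range_term (hσ : 1 < σ) (hτ : 0 < τ) {t E : ℝ} (hE : 1 ≤ E)
    (ht : t = (σ - 1) * E ^ (σ - 1) * log E) :
    BddAbove (Set.range fun p : ℕ => max 0 (p * t - τ * (p : ℝ) ^ σ * log p)) :=
  ⟨_, Set.forall_mem_range.2 (max_term_le_upperConst hσ hτ hE ht)⟩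

lemma assocLog_le (hσ : 1 < σ) (hτ : 0 < τ) {t E : ℝ} (hE : 1 ≤ E)
    (ht : t = (σ - 1) * E ^ (σ - 1) * log E) :
    assocLog σ τ t ≤ upperConst σ τ * (t * E) :=
  ciSup_le (max_term_le_upperConst hσ hτ hE ht)

lemma exists_add_le_assocLog (hσ : 1 < σ) (hτ : 0 < τ) :
    ∃ C : ℝ, ∀ t E : ℝ, 1 ≤ E → t = (σ - 1) * E ^ (σ - 1) * log E →
      lowerConst σ τ / 4 * (t * E) + C ≤ assocLog σ τ t := by
  set α := lowerConst σ τ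
  have hσ1 : 0 < σ - 1 := sub_pos.2 hσ
  have hα0 : 0 < α := lowerConst_pos hσ hτ
  have hlog : 0 ≤ log (4 / α) :=
    log_nonneg ((one_le_div hα0).2 (lowerConst_le_one.trans (by norm_num)))
  refine ⟨-(α / 4 * ((σ - 1) * (4 / α) ^ σ * log (4 / α))), fun t E hE ht => ?_⟩
  have hbdd := bddAbove_range_term hσ hτ hE ht
  rcases le_or_gt 4 (α * E) with hαE | hαE
  · have hterm := le_term_ceil hσ hτ.le hα0 lowerConst_le_one
      (mul_two_mul_lowerConst_rpow_le hσ hτ) hαE ht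
    have hle := (le_max_right _ _).trans (le_ciSup hbdd ⌈α * E⌉₊)
    have : 0 ≤ α / 4 * ((σ - 1) * (4 / α) ^ σ * log (4 / α)) := by positivity
    unfold assocLog
    linarith
  · have hE' : E ≤ 4 / α := by rw [le_div_iff₀ hα0]; linarith
    have htE : t * E ≤ (σ - 1) * (4 / α) ^ σ * log (4 / α) := by
      have hEσ : E ^ σ = E ^ (σ - 1) * E := by rw [← rpow_add_one (by linarith), sub_add_cancel]
      calc t * E = (σ - 1) * E ^ σ * log E := by rw [ht, hEσ]; ring
        _ ≤ (σ - 1) * (4 / α) ^ σ * log (4 / α) := by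
          have := log_nonneg hE
          gcongr
    have h0 := (le_max_left _ _).trans (le_ciSup hbdd 0)
    have := mul_le_mul_of_nonneg_left htE (by positivity : (0 : ℝ) ≤ α / 4)
    unfold assocLog
    linarith

lemma max_zero_log_pow_div_eq (hτ : 0 ≤ τ) {M : ℕ → ℝ} (hM0 : M 0 = 1)
    (hM : ∀ p : ℕ, 1 ≤ p → M p = (p : ℝ) ^ (τ * (p : ℝ) ^ σ)) {k : ℝ} (hk : 0 < k) (p : ℕ) :
    max 0 (log (k ^ p / M p)) = max 0 (p * max 0 (log k) - τ * (p : ℝ) ^ σ * log p) := by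
  have hlog : log (k ^ p / M p) = p * log k - τ * (p : ℝ) ^ σ * log p := by
    rcases p.eq_zero_or_pos with rfl | hp
    · simp [hM0]
    · have hp0 : (0 : ℝ) < p := by exact_mod_cast hp
      rw [hM p hp, log_div (by positivity) (by positivity), log_pow, log_rpow hp0]
  have hc : 0 ≤ τ * (p : ℝ) ^ σ * log p := by have := log_natCast_nonneg p; positivity
  rw [hlog]
  rcases le_total 0 (log k) with h | h
  · rw [max_eq_right h]
  · have : (p : ℝ) * log k ≤ 0 := mul_nonpos_of_nonneg_of_nonpos p.cast_nonneg h
    rw [max_eq_left h, max_eq_left (by linarith), max_eq_left (by linarith)]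

lemma self_mul_exp_eq (hσ : 1 < σ) (s : ℝ) :
    s * exp s = (σ - 1) * exp (s / (σ - 1)) ^ (σ - 1) * log (exp (s / (σ - 1))) := by
  have hσ1 : σ - 1 ≠ 0 := (sub_pos.2 hσ).ne'
  rw [log_exp, ← exp_mul, div_mul_cancel₀ _ hσ1]
  field_simp

lemma rpow_div_rpow_eq_mul_exp (hσ : 1 < σ) {s : ℝ} (hs : 0 < s) :
    (s * exp s) ^ (σ / (σ - 1)) / s ^ (1 / (σ - 1)) = s * exp s * exp (s / (σ - 1)) := by
  have hσ1 : σ - 1 ≠ 0 := (sub_pos.2 hσ).ne'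
  have he : σ / (σ - 1) = 1 + 1 / (σ - 1) := by field_simp; ring
  rw [he, rpow_add (by positivity), rpow_one, mul_div_assoc, ← div_rpow (by positivity) hs.le,
    mul_div_cancel_left₀ _ hs.ne', ← exp_mul, mul_one_div]

lemma eq_mul_exp_of_lambertW (hσ : 1 < σ) {W φ : ℝ → ℝ} (hφ0 : φ 0 = 0)
    (hφ : ∀ t : ℝ, 0 < t → φ t = t ^ (σ / (σ - 1)) / (W t) ^ (1 / (σ - 1)))
    {t : ℝ} (ht : 0 ≤ t) (hs : 0 ≤ W t) (hst : W t * exp (W t) = t) :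
    φ t = t * exp (W t / (σ - 1)) := by
  rcases ht.eq_or_lt with rfl | ht
  · rw [hφ0, zero_mul]
  · have hs' : 0 < W t := hs.lt_of_ne fun h => by rw [← h, zero_mul] at hst; exact ht.ne hst
    have := rpow_div_rpow_eq_mul_exp hσ hs'
    rwa [hst, ← hφ t ht] at this

end

/-- Two-sided estimate of the associated function T_{τ,σ} by φ_σ(ln_+ k), where
    φ_σ(t) = t^{σ/(σ−1)} / W(t)^{1/(σ−1)}. -/
theorem stmt_14 (W : ℝ → ℝ)
    (hW : ∀ y : ℝ, 0 ≤ y → 0 ≤ W y ∧ W y * Real.exp (W y) = y)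
    (σ τ : ℝ) (hσ : 1 < σ) (hτ : 0 < τ)
    (φ : ℝ → ℝ) (hφ0 : φ 0 = 0)
    (hφ : ∀ t : ℝ, 0 < t → φ t = t ^ (σ / (σ - 1)) / (W t) ^ (1 / (σ - 1)))
    (M : ℕ → ℝ) (hM0 : M 0 = 1)
    (hM : ∀ p : ℕ, 1 ≤ p → M p = (p : ℝ) ^ (τ * (p : ℝ) ^ σ))
    (T : ℝ → ℝ)
    (hT : ∀ k : ℝ, T k = ⨆ p : ℕ, max 0 (Real.log (k ^ p / M p))) :
    ∃ A B : ℝ, 0 < A ∧ 0 < B ∧ ∃ A' B' : ℝ, ∀ k : ℝ, 0 < k →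
      B * φ (max 0 (Real.log k)) + B' ≤ T k ∧
      T k ≤ A * φ (max 0 (Real.log k)) + A' := by
  obtain ⟨C, hC⟩ := exists_add_le_assocLog hσ hτ
  refine ⟨upperConst σ τ, lowerConst σ τ / 4, one_pos.trans_le one_le_upperConst,
    by linarith [lowerConst_pos hσ hτ], 0, C, fun k hk => ?_⟩
  have hTk : T k = assocLog σ τ (max 0 (Real.log k)) :=
    (hT k).trans (iSup_congr (max_zero_log_pow_div_eq hτ.le hM0 hM hk))
  have ht0 : 0 ≤ max 0 (Real.log k) := le_max_left _ _
  rw [hTk, add_zero]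
  generalize max 0 (Real.log k) = t at ht0 ⊢
  obtain ⟨hs, hst⟩ := hW t ht0
  have hE : 1 ≤ Real.exp (W t / (σ - 1)) := one_le_exp (div_nonneg hs (sub_pos.2 hσ).le)
  have ht := hst.symm.trans (self_mul_exp_eq hσ (W t))
  rw [eq_mul_exp_of_lambertW hσ hφ0 hφ ht0 hs hst]
  exact ⟨hC _ _ hE ht, assocLog_le hσ hτ hE ht⟩
end

section
/- For C > 0, τ > 0, σ > 1, p ≥ 1 an integer, and λ ≥ 1: C^{p^{σ−1}} p^{τ p^{σ−1}} ≤ λ if and only if p ≤ C^{−1/τ} · exp( W(C^{(σ−1)/τ} · ((σ−1)/τ) · ln λ) / (σ−1) ), where W is the principal branch of the Lambert W function. -/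
/-!
Put `s = σ - 1` and `z = p C^{1/τ}`. The left-hand side equals `z^{τ p^s}`, so the inequality
reads `τ p^s log z ≤ log λ`. For `u = s log z` one has `e^u = p^s C^{s/τ}`, hence after multiplying
by `(s/τ) C^{s/τ}` it becomes `u e^u ≤ y` with `y` the argument of `W`. As `x ↦ x e^x` is
increasing wherever it takes nonnegative values, this is `u ≤ W y`, i.e. `p ≤ C^{-1/τ} e^{W y / s}`.
-/

open Real

lemma mul_exp_le_mul_exp_iff {u w : ℝ} (hw : 0 ≤ w) : u * exp u ≤ w * exp w ↔ u ≤ w := by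
  constructor
  · intro h
    by_contra! hwu
    have : w * exp w < u * exp u :=
      mul_lt_mul hwu (exp_le_exp.2 hwu.le) (exp_pos w) (hw.trans hwu.le)
    linarith
  · intro h
    rcases le_or_gt u 0 with hu | hu
    · exact (mul_nonpos_of_nonpos_of_nonneg hu (exp_pos u).le).trans (by positivity)
    · exact mul_le_mul h (exp_le_exp.2 h) (exp_pos u).le hw

lemma rpow_mul_rpow_mul_eq_mul_rpow {C x : ℝ} (hC : 0 ≤ C) (hx : 0 ≤ x) {τ : ℝ} (hτ : τ ≠ 0)
    (a : ℝ) : C ^ a * x ^ (τ * a) = (x * C ^ τ⁻¹) ^ (τ * a) := by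
  rw [mul_rpow hx (by positivity), ← rpow_mul hC, inv_mul_cancel_left₀ hτ, mul_comm]

lemma mul_log_mul_exp_mul_log {C x : ℝ} (hC : 0 < C) (hx : 0 < x) {τ : ℝ} (hτ : τ ≠ 0) (s : ℝ) :
    s * log (x * C ^ τ⁻¹) * exp (s * log (x * C ^ τ⁻¹))
      = s / τ * C ^ (s / τ) * (τ * x ^ s * log (x * C ^ τ⁻¹)) := by
  have hexp : exp (s * log (x * C ^ τ⁻¹)) = x ^ s * C ^ (s / τ) := by
    rw [mul_comm, ← rpow_def_of_pos (by positivity), mul_rpow hx.le (by positivity),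
      ← rpow_mul hC.le, inv_mul_eq_div]
  rw [hexp]
  field_simp

lemma le_rpow_neg_inv_mul_exp_iff {C x : ℝ} (hC : 0 < C) (hx : 0 < x) {s : ℝ} (hs : 0 < s)
    (τ w : ℝ) : x ≤ C ^ (-τ⁻¹) * exp (w / s) ↔ s * log (x * C ^ τ⁻¹) ≤ w := by
  have hCτ : 0 < C ^ τ⁻¹ := rpow_pos_of_pos hC _
  rw [rpow_neg hC.le, ← div_eq_inv_mul, le_div_iff₀ hCτ, ← log_le_iff_le_exp (by positivity),
    le_div_iff₀ hs, mul_comm]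

/-- For C, τ > 0, σ > 1, p ≥ 1 and λ ≥ 1:
    C^{p^{σ−1}} p^{τ p^{σ−1}} ≤ λ ↔ p ≤ C^{−1/τ}·exp(W(C^{(σ−1)/τ}·((σ−1)/τ)·ln λ)/(σ−1)). -/
theorem stmt_15 (W : ℝ → ℝ)
    (hW : ∀ y : ℝ, 0 ≤ y → 0 ≤ W y ∧ W y * Real.exp (W y) = y)
    (C τ σ : ℝ) (hC : 0 < C) (hτ : 0 < τ) (hσ : 1 < σ) :
    ∀ p : ℕ, 1 ≤ p → ∀ lam : ℝ, 1 ≤ lam →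
      (C ^ ((p : ℝ) ^ (σ - 1)) * (p : ℝ) ^ (τ * (p : ℝ) ^ (σ - 1)) ≤ lam ↔
        (p : ℝ) ≤ C ^ (-(1 : ℝ) / τ) *
          Real.exp (W (C ^ ((σ - 1) / τ) * ((σ - 1) / τ) * Real.log lam) / (σ - 1))) := by
  intro p hp lam hlam
  set s := σ - 1
  set y := C ^ (s / τ) * (s / τ) * log lam
  have hp0 : (0 : ℝ) < p := by exact_mod_cast hp
  have hy : 0 ≤ y := mul_nonneg (by positivity) (log_nonneg hlam)
  obtain ⟨hWy, hWexp⟩ := hW y hy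
  have hs : 0 < s := by linarith
  have hK : 0 < s / τ * C ^ (s / τ) := by positivity
  rw [rpow_mul_rpow_mul_eq_mul_rpow hC.le hp0.le hτ.ne', rpow_le_iff_le_log (by positivity)
    (by linarith), ← mul_le_mul_iff_right₀ hK, ← mul_log_mul_exp_mul_log hC hp0 hτ.ne',
    show s / τ * C ^ (s / τ) * log lam = W y * exp (W y) by rw [hWexp]; ring,
    mul_exp_le_mul_exp_iff hWy, neg_div, one_div,
    le_rpow_neg_inv_mul_exp_iff hC hp0 hs]
end

section
/- Fix σ > 1 and define φ_σ(t) = t^{σ/(σ−1)} / W(t)^{1/(σ−1)} for t > 0, φ_σ(0) = 0. Then ω(t) = φ_σ(ln_+ |t|) satisfies: ω(2t) = O(ω(t)) as t → ∞, ω(t) = O(t) as t → ∞, and ln t = o(ω(t)) as t → ∞. -/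
/-!
For `t > 1` put `L = log t` and `a = 1 / (σ - 1)`; then `ω t = L ^ (1 + a) / W L ^ a`.
Since `L / W L = exp (W L)`, this equals `L * exp (a * W L)`, and `W L → ∞` gives `log = o(ω)`.
Once `W L ≥ 1` we have `ω t ≤ L ^ (1 + a) = o(t)`. Doubling `t` adds `log 2 ≤ L` to `L`, and as
`W` is monotone this multiplies `ω` by at most `2 ^ (1 + a)`.
-/

open Real Filter Asymptotics Set

def IsLambertW (W : ℝ → ℝ) : Prop :=
  ∀ y : ℝ, 0 ≤ y → 0 ≤ W y ∧ W y * exp (W y) = y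

lemma strictMonoOn_mul_exp : StrictMonoOn (fun x : ℝ => x * exp x) (Ici 0) :=
  fun x _ _ hy hxy => mul_lt_mul hxy (exp_le_exp.2 hxy.le) (exp_pos x) hy

namespace IsLambertW

variable {W : ℝ → ℝ} (hW : IsLambertW W) {y : ℝ}
include hW

lemma nonneg (hy : 0 ≤ y) : 0 ≤ W y := (hW y hy).1

lemma mul_exp_self (hy : 0 ≤ y) : W y * exp (W y) = y := (hW y hy).2

lemma le_apply_iff {b : ℝ} (hb : 0 ≤ b) (hy : 0 ≤ y) : b ≤ W y ↔ b * exp b ≤ y := by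
  conv_rhs => rw [← hW.mul_exp_self hy]
  exact (strictMonoOn_mul_exp.le_iff_le hb (hW.nonneg hy)).symm

lemma monotoneOn : MonotoneOn W (Ici 0) := fun _ hx _ hy hxy =>
  (hW.le_apply_iff (hW.nonneg hx) hy).2 ((hW.mul_exp_self hx).trans_le hxy)

lemma pos (hy : 0 < y) : 0 < W y := by
  refine (hW.nonneg hy.le).lt_of_ne fun h => hy.ne ?_
  rw [← hW.mul_exp_self hy.le, ← h, zero_mul]

lemma tendsto_atTop : Tendsto W atTop atTop := by
  refine tendsto_atTop_atTop.2 fun b => ⟨max b 0 * exp (max b 0), fun y hy => ?_⟩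
  have hb : 0 ≤ max b 0 := le_max_right b 0
  exact (le_max_left b 0).trans ((hW.le_apply_iff hb ((by positivity : (0 : ℝ) ≤ _).trans hy)).2 hy)

lemma div_apply_eq_exp (hy : 0 < y) : y / W y = exp (W y) := by
  rw [div_eq_iff (hW.pos hy).ne', mul_comm, hW.mul_exp_self hy.le]

end IsLambertW

/-- With `a = 1 / (σ - 1)`, this is the paper's `φ_σ` on `(0, ∞)`. -/
noncomputable def lambertWeight (W : ℝ → ℝ) (a x : ℝ) : ℝ := x ^ (1 + a) / W x ^ a

section lambertWeight

variable {W : ℝ → ℝ} (hW : IsLambertW W) {a : ℝ}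
include hW

lemma lambertWeight_nonneg {x : ℝ} (hx : 0 ≤ x) : 0 ≤ lambertWeight W a x :=
  div_nonneg (rpow_nonneg hx _) (rpow_nonneg (hW.nonneg hx) _)

lemma lambertWeight_eq_mul_exp {x : ℝ} (hx : 0 < x) :
    lambertWeight W a x = x * exp (a * W x) := by
  rw [lambertWeight, rpow_add hx, rpow_one, mul_div_assoc, ← div_rpow hx.le (hW.nonneg hx.le),
    hW.div_apply_eq_exp hx, ← exp_mul, mul_comm (W x)]

lemma lambertWeight_le_mul (ha : 0 ≤ a) {x y c : ℝ} (hx : 0 < x) (hxy : x ≤ y)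
    (hyc : y ≤ c * x) : lambertWeight W a y ≤ c ^ (1 + a) * lambertWeight W a x := by
  have hc : 0 ≤ c := by nlinarith
  have hWx := hW.pos hx
  calc y ^ (1 + a) / W y ^ a ≤ (c * x) ^ (1 + a) / W x ^ a :=
        div_le_div₀ (by positivity) (rpow_le_rpow (hx.le.trans hxy) hyc (by linarith))
          (by positivity) (rpow_le_rpow hWx.le (hW.monotoneOn hx.le (hx.le.trans hxy) hxy) ha)
    _ = c ^ (1 + a) * lambertWeight W a x := by
        rw [mul_rpow hc hx.le, mul_div_assoc, lambertWeight]

lemma isBigO_lambertWeight_add (ha : 0 ≤ a) {b : ℝ} (hb : 0 ≤ b) :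
    (fun x => lambertWeight W a (x + b)) =O[atTop] lambertWeight W a := by
  refine IsBigO.of_bound (2 ^ (1 + a)) ?_
  filter_upwards [eventually_ge_atTop b, eventually_gt_atTop 0] with x hbx hx
  rw [norm_of_nonneg (lambertWeight_nonneg hW (by linarith)),
    norm_of_nonneg (lambertWeight_nonneg hW hx.le)]
  exact lambertWeight_le_mul hW ha hx (by linarith) (by linarith)

lemma isBigO_lambertWeight_rpow (ha : 0 ≤ a) :
    lambertWeight W a =O[atTop] fun x => x ^ (1 + a) := by
  refine IsBigO.of_bound 1 ?_
  filter_upwards [hW.tendsto_atTop.eventually_ge_atTop 1, eventually_ge_atTop 0] with x hWx hx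
  rw [norm_of_nonneg (lambertWeight_nonneg hW hx), norm_of_nonneg (rpow_nonneg hx _), one_mul]
  exact div_le_self (rpow_nonneg hx _) (one_le_rpow hWx ha)

lemma isLittleO_id_lambertWeight (ha : 0 < a) : (fun x => x) =o[atTop] lambertWeight W a := by
  have hexp : (fun _ => (1 : ℝ)) =o[atTop] fun x => exp (a * W x) :=
    (isLittleO_one_left_iff ℝ).2 <| by simpa using hW.tendsto_atTop.const_mul_atTop ha
  refine ((isBigO_refl (fun x => x) atTop).mul_isLittleO hexp).congr' (by simp) ?_
  filter_upwards [eventually_gt_atTop 0] with x hx using (lambertWeight_eq_mul_exp hW hx).symm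

end lambertWeight

theorem stmt_17_general (W : ℝ → ℝ)
    (hW : ∀ y : ℝ, 0 ≤ y → 0 ≤ W y ∧ W y * Real.exp (W y) = y)
    (σ : ℝ) (hσ : 1 < σ)
    (φ : ℝ → ℝ)
    (hφ : ∀ t : ℝ, 0 < t → φ t = t ^ (σ / (σ - 1)) / (W t) ^ (1 / (σ - 1)))
    (ω : ℝ → ℝ) (hω : ∀ t : ℝ, ω t = φ (max 0 (Real.log |t|))) :
    (fun t : ℝ => ω (2 * t)) =O[Filter.atTop] ω ∧
    ω =O[Filter.atTop] (fun t : ℝ => t) ∧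
    (fun t : ℝ => Real.log t) =o[Filter.atTop] ω := by
  have ha : 0 < 1 / (σ - 1) := one_div_pos.2 (sub_pos.2 hσ)
  have hω_eq : ∀ t, 1 < t → ω t = lambertWeight W (1 / (σ - 1)) (log t) := by
    intro t ht
    have hexp : σ / (σ - 1) = 1 + 1 / (σ - 1) := by field_simp [(sub_pos.2 hσ).ne']; ring
    rw [hω, abs_of_pos (by linarith), max_eq_right (log_pos ht).le, hφ _ (log_pos ht), hexp,
      lambertWeight]
  have hω_ev : ω =ᶠ[atTop] lambertWeight W (1 / (σ - 1)) ∘ log :=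
    (eventually_gt_atTop 1).mono hω_eq
  have hω2_ev : (fun t => ω (2 * t)) =ᶠ[atTop]
      (fun x => lambertWeight W (1 / (σ - 1)) (x + log 2)) ∘ log := by
    filter_upwards [eventually_gt_atTop 1] with t ht
    rw [hω_eq _ (by linarith), Function.comp, log_mul two_ne_zero (by linarith), add_comm]
  have hlog_rpow : (fun t => log t ^ (1 + 1 / (σ - 1))) =o[atTop] fun t => t := by
    simpa using isLittleO_log_rpow_rpow_atTop (1 + 1 / (σ - 1)) one_pos
  refine ⟨?_, ?_, ?_⟩
  · exact ((isBigO_lambertWeight_add hW ha.le (log_nonneg one_le_two)).comp_tendsto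
      tendsto_log_atTop).congr' hω2_ev.symm hω_ev.symm
  · exact (((isBigO_lambertWeight_rpow hW ha.le).comp_tendsto tendsto_log_atTop).trans_isLittleO
      hlog_rpow).isBigO.congr' hω_ev.symm EventuallyEq.rfl
  · exact ((isLittleO_id_lambertWeight hW ha).comp_tendsto tendsto_log_atTop).congr'
      EventuallyEq.rfl hω_ev.symm

/-- ω(t) = φ_σ(ln_+ |t|) satisfies ω(2t) = O(ω(t)), ω(t) = O(t) and ln t = o(ω(t)) as t → ∞. -/
theorem stmt_17 (W : ℝ → ℝ)
    (hW : ∀ y : ℝ, 0 ≤ y → 0 ≤ W y ∧ W y * Real.exp (W y) = y)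
    (σ : ℝ) (hσ : 1 < σ)
    (φ : ℝ → ℝ) (hφ0 : φ 0 = 0)
    (hφ : ∀ t : ℝ, 0 < t → φ t = t ^ (σ / (σ - 1)) / (W t) ^ (1 / (σ - 1)))
    (ω : ℝ → ℝ) (hω : ∀ t : ℝ, ω t = φ (max 0 (Real.log |t|))) :
    (fun t : ℝ => ω (2 * t)) =O[Filter.atTop] ω ∧
    ω =O[Filter.atTop] (fun t : ℝ => t) ∧
    (fun t : ℝ => Real.log t) =o[Filter.atTop] ω :=
  stmt_17_general W hW σ hσ φ hφ ω hω
end
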